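/- For a finite simplicial graph Γ and any field k, the second cohomology H^2(A(Γ); k) of the right-angled Artin group A(Γ) with trivial coefficients is generated by cup products of elements of H^1(A(Γ); k), and the classes f_v ⌣ f_w for edges {v,w} of Γ form a basis of H^2(A(Γ); k). -/

import Mathlib

open scoped commutatorElement

/-- The defining relations of the right-angled Artin group on a graph `Γ`:
commutators of generators spanning an edge. -/
def raagRels {V : Type*} (Γ : SimpleGraph V) : Set (FreeGroup V) :=
  {r | ∃ v w : V, Γ.Adj v w ∧ r = ⁅FreeGroup.of v, FreeGroup.of w⁆}

/-- The right-angled Artin group `A(Γ)` of a graph `Γ`. -/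
def RAAG {V : Type*} (Γ : SimpleGraph V) : Type _ := PresentedGroup (raagRels Γ)

instance {V : Type*} (Γ : SimpleGraph V) : Group (RAAG Γ) :=
  QuotientGroup.Quotient.group _

/-- The generator of `A(Γ)` corresponding to a vertex. -/
def RAAG.gen {V : Type*} (Γ : SimpleGraph V) (v : V) : RAAG Γ :=
  PresentedGroup.of (rels := raagRels Γ) v

/-- The defining relations of the right-angled Coxeter group on a graph `Γ`:
edge commutators together with the squares of all generators. -/
def racgRels {V : Type*} (Γ : SimpleGraph V) : Set (FreeGroup V) :=
  raagRels Γ ∪ {r | ∃ v : V, r = (FreeGroup.of v) ^ 2}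

/-- The right-angled Coxeter group `C(Γ)` of a graph `Γ`. -/
def RACG {V : Type*} (Γ : SimpleGraph V) : Type _ := PresentedGroup (racgRels Γ)

instance {V : Type*} (Γ : SimpleGraph V) : Group (RACG Γ) :=
  QuotientGroup.Quotient.group _

/-- The generator of `C(Γ)` corresponding to a vertex. -/
def RACG.gen {V : Type*} (Γ : SimpleGraph V) (v : V) : RACG Γ :=
  PresentedGroup.of (rels := racgRels Γ) v
section GroupCohomologyLowDim

variable (k : Type*) [CommRing k] (G : Type*) [Group G]

/-- `H¹(G; k)` with trivial coefficients: additive homomorphisms `G → k`,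
as a `k`-module. -/
def H1 : Submodule k (G → k) where
  carrier := {f | ∀ x y : G, f (x * y) = f x + f y}
  add_mem' := by
    intro f g hf hg x y
    simp only [Pi.add_apply, hf x y, hg x y]; ring
  zero_mem' := by intro x y; simp
  smul_mem' := by
    intro a f hf x y
    simp only [Pi.smul_apply, smul_eq_mul, hf x y]; ring

variable {k G} in
/-- The (inhomogeneous) 2-cocycle condition for trivial coefficients. -/
def IsTwoCocycle (c : G → G → k) : Prop :=
  ∀ x y z : G, c y z - c (x * y) z + c x (y * z) - c x y = 0

variable {k G} in
/-- The (inhomogeneous) 2-coboundary condition for trivial coefficients. -/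
def IsTwoCoboundary (c : G → G → k) : Prop :=
  ∃ f : G → k, ∀ x y : G, c x y = f x - f (x * y) + f y

/-- The `k`-module of 2-cocycles on `G` with trivial coefficients. -/
def twoCocycles : Submodule k (G → G → k) where
  carrier := {c | IsTwoCocycle c}
  add_mem' := by
    intro c d hc hd x y z
    have h1 := hc x y z
    have h2 := hd x y z
    simp only [Pi.add_apply]
    linear_combination h1 + h2
  zero_mem' := by intro x y z; simp
  smul_mem' := by
    intro a c hc x y z
    have h1 := hc x y z
    simp only [Pi.smul_apply, smul_eq_mul]
    linear_combination a * h1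

/-- The 2-coboundaries, as a submodule of the 2-cocycles. -/
def twoCoboundariesIn : Submodule k (twoCocycles k G) where
  carrier := {c | IsTwoCoboundary (c : G → G → k)}
  add_mem' := by
    rintro c d ⟨f, hf⟩ ⟨g, hg⟩
    exact ⟨f + g, fun x y => by
      simp only [Submodule.coe_add, Pi.add_apply, hf x y, hg x y]; ring⟩
  zero_mem' := ⟨0, fun x y => by simp⟩
  smul_mem' := by
    rintro a c ⟨f, hf⟩
    exact ⟨a • f, fun x y => by
      simp only [SetLike.val_smul, Pi.smul_apply, smul_eq_mul, hf x y]; ring⟩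

/-- `H²(G; k)` with trivial coefficients: 2-cocycles modulo 2-coboundaries. -/
def H2 : Type _ := twoCocycles k G ⧸ twoCoboundariesIn k G

noncomputable instance : AddCommGroup (H2 k G) := by
  unfold H2; infer_instance

noncomputable instance : Module k (H2 k G) := by
  unfold H2; infer_instance

variable {k G} in
/-- The 2-cocycle `(x, y) ↦ f x * g y` given by two 1-cocycles. -/
def cupCocycle (f g : H1 k G) : twoCocycles k G :=
  ⟨fun x y => f.1 x * g.1 y, by
    intro x y z
    have hf := f.2 x y
    have hg := g.2 y z
    simp only [Set.mem_setOf_eq] at hf hg ⊢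
    linear_combination (f.1 x : k) * hg - (g.1 z : k) * hf⟩

/-- The cup product `H¹(G;k) × H¹(G;k) → H²(G;k)` as a `k`-bilinear map. -/
noncomputable def cup : H1 k G →ₗ[k] H1 k G →ₗ[k] H2 k G :=
  LinearMap.mk₂ k (fun f g => Submodule.Quotient.mk (cupCocycle f g))
    (by
      intro f f' g
      have h : cupCocycle (f + f') g = cupCocycle f g + cupCocycle f' g := by
        apply Subtype.ext; funext x y; simp [cupCocycle]; ring
      show Submodule.Quotient.mk (cupCocycle (f + f') g) = _
      rw [h, Submodule.Quotient.mk_add]; rfl)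
    (by
      intro a f g
      have h : cupCocycle (a • f) g = a • cupCocycle f g := by
        apply Subtype.ext; funext x y; simp [cupCocycle]; ring
      show Submodule.Quotient.mk (cupCocycle (a • f) g) = _
      rw [h, Submodule.Quotient.mk_smul]; rfl)
    (by
      intro f g g'
      have h : cupCocycle f (g + g') = cupCocycle f g + cupCocycle f g' := by
        apply Subtype.ext; funext x y; simp [cupCocycle]; ring
      show Submodule.Quotient.mk (cupCocycle f (g + g')) = _
      rw [h, Submodule.Quotient.mk_add]; rfl)
    (by
      intro a f g
      have h : cupCocycle f (a • g) = a • cupCocycle f g := by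
        apply Subtype.ext; funext x y; simp [cupCocycle]; ring
      show Submodule.Quotient.mk (cupCocycle f (a • g)) = _
      rw [h, Submodule.Quotient.mk_smul]; rfl)

variable {k G}

variable {G' : Type*} [Group G']

/-- The map on `H¹` induced by a group homomorphism. -/
def H1map (φ : G →* G') : H1 k G' →ₗ[k] H1 k G where
  toFun f := ⟨f.1 ∘ φ, by intro x y; simp only [Function.comp_apply, map_mul]; exact f.2 _ _⟩
  map_add' f g := rfl
  map_smul' a f := rfl

/-- The pull-back of 2-cocycles along a group homomorphism. -/
def twoCocyclesMap (φ : G →* G') : twoCocycles k G' →ₗ[k] twoCocycles k G where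
  toFun c := ⟨fun x y => c.1 (φ x) (φ y), by
    intro x y z
    have := c.2 (φ x) (φ y) (φ z)
    simp only [map_mul] at *
    exact this⟩
  map_add' c d := rfl
  map_smul' a c := rfl

/-- The map on `H²` induced by a group homomorphism. -/
noncomputable def H2map (φ : G →* G') : H2 k G' →ₗ[k] H2 k G :=
  Submodule.mapQ (twoCoboundariesIn k G') (twoCoboundariesIn k G) (twoCocyclesMap φ)
    (by
      rintro c ⟨f, hf⟩
      exact ⟨f ∘ φ, fun x y => by
        simp only [Function.comp_apply, map_mul, twoCocyclesMap, LinearMap.coe_mk,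
          AddHom.coe_mk]
        exact hf _ _⟩)

end GroupCohomologyLowDim
section DualClassesAndProjection

variable {V : Type*} [DecidableEq V] (Γ : SimpleGraph V) (k : Type*) [CommRing k]

/-- The homomorphism `A(Γ) → k` (written multiplicatively) dual to a vertex `v`,
sending `v ↦ 1` and all other generators to `0`. -/
def RAAG.dualHom (v : V) : RAAG Γ →* Multiplicative k :=
  PresentedGroup.toGroup
    (f := fun w => Multiplicative.ofAdd (if w = v then (1 : k) else 0))
    (by
      rintro r ⟨a, b, hab, rfl⟩
      rw [map_commutatorElement]
      exact commutatorElement_eq_one_iff_commute.mpr (mul_comm _ _))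

/-- The cohomology class `f_v ∈ H¹(A(Γ); k)` dual to the vertex `v`. -/
def RAAG.dual (v : V) : H1 k (RAAG Γ) :=
  ⟨fun g => Multiplicative.toAdd (RAAG.dualHom Γ k v g), by
    intro x y
    simp [map_mul]⟩

/-- The canonical surjection `A(Γ) → C(Γ)`. -/
def raagToRacg : RAAG Γ →* RACG Γ :=
  PresentedGroup.toGroup (f := fun v => RACG.gen Γ v) (by
    intro r hr
    have h : FreeGroup.lift (fun v => RACG.gen Γ v) = PresentedGroup.mk (racgRels Γ) := by
      apply FreeGroup.ext_hom
      intro a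
      simp only [FreeGroup.lift_apply_of]
      rfl
    rw [h]
    have hmem : r ∈ Subgroup.normalClosure (racgRels Γ) :=
      Subgroup.subset_normalClosure (Set.mem_union_left _ hr)
    exact (QuotientGroup.eq_one_iff r).mpr hmem)

end DualClassesAndProjection

/-! For commuting `x, y` the functional `c ↦ c x y - c y x` kills coboundaries, so every edge
`{v, w}` of `Γ`, once oriented, gives a linear form on `H²(A(Γ); k)`; on `f_a ⌣ f_b` it is the
Kronecker delta of the oriented edges `(v, w)` and `(a, b)`. Conversely, if all these forms
vanish on a cocycle `c`, then `c` is symmetric on every defining commutator, so `v ↦ (0, v)`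
extends to a homomorphic section of the central extension of `A(Γ)` by `k` defined by `c`, and
such a section exhibits `c` as a coboundary. The cup products `f_v ⌣ f_w` and the edge forms
are therefore dual bases. -/

section CentralExtension

variable {k : Type*} [CommRing k] {G : Type*} [Group G]

lemma twoCocycle_apply_one_left (c : twoCocycles k G) (z : G) : c.1 1 z = c.1 1 1 := by
  have h := c.2 1 1 z
  simp only [one_mul] at h
  linear_combination h

lemma twoCocycle_apply_one_right (c : twoCocycles k G) (x : G) : c.1 x 1 = c.1 1 1 := by
  have h := c.2 x 1 1
  simp only [mul_one] at h
  linear_combination -h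

lemma twoCocycle_apply_inv_self (c : twoCocycles k G) (x : G) : c.1 x⁻¹ x = c.1 x x⁻¹ := by
  have h := c.2 x x⁻¹ x
  simp only [mul_inv_cancel, inv_mul_cancel] at h
  linear_combination h + twoCocycle_apply_one_left c x - twoCocycle_apply_one_right c x

@[ext]
structure CocycleExtension (c : twoCocycles k G) where
  central : k
  base : G

namespace CocycleExtension

variable {c : twoCocycles k G}

instance : Mul (CocycleExtension c) :=
  ⟨fun p q => ⟨p.central + q.central + c.1 p.base q.base, p.base * q.base⟩⟩
instance : One (CocycleExtension c) := ⟨⟨-c.1 1 1, 1⟩⟩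
instance : Inv (CocycleExtension c) :=
  ⟨fun p => ⟨-c.1 1 1 - p.central - c.1 p.base p.base⁻¹, p.base⁻¹⟩⟩

@[simp] lemma mul_central (p q : CocycleExtension c) :
    (p * q).central = p.central + q.central + c.1 p.base q.base := rfl
@[simp] lemma mul_base (p q : CocycleExtension c) : (p * q).base = p.base * q.base := rfl
@[simp] lemma one_central : (1 : CocycleExtension c).central = -c.1 1 1 := rfl
@[simp] lemma one_base : (1 : CocycleExtension c).base = 1 := rfl
@[simp] lemma inv_central (p : CocycleExtension c) :
    p⁻¹.central = -c.1 1 1 - p.central - c.1 p.base p.base⁻¹ := rfl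
@[simp] lemma inv_base (p : CocycleExtension c) : p⁻¹.base = p.base⁻¹ := rfl

instance : Group (CocycleExtension c) where
  mul_assoc p q r := by
    ext
    · simp only [mul_central, mul_base]
      linear_combination -c.2 p.base q.base r.base
    · simp [mul_assoc]
  one_mul p := by
    ext
    · simp only [mul_central, one_central, one_base, twoCocycle_apply_one_left]
      ring
    · simp
  mul_one p := by
    ext
    · simp only [mul_central, one_central, one_base, twoCocycle_apply_one_right]
      ring
    · simp
  inv_mul_cancel p := by
    ext
    · simp only [mul_central, inv_central, inv_base, one_central, twoCocycle_apply_inv_self]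
      ring
    · simp

def proj : CocycleExtension c →* G where
  toFun p := p.base
  map_one' := rfl
  map_mul' _ _ := rfl

/-- A homomorphic section `x ↦ (-f x, x)` of the extension is exactly a cochain `f`
with coboundary `c`. -/
lemma isTwoCoboundary_of_section (s : G →* CocycleExtension c) (hs : proj.comp s = .id G) :
    IsTwoCoboundary c.1 := by
  have hbase (x : G) : (s x).base = x := DFunLike.congr_fun hs x
  refine ⟨fun x => -(s x).central, fun x y => ?_⟩
  have h := congrArg central (map_mul s x y)
  rw [mul_central, hbase x, hbase y] at h
  linear_combination -h

end CocycleExtension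

end CentralExtension

section CommutatorPairing

variable {k : Type*} [CommRing k] {G : Type*} [Group G]

noncomputable def H2.commutatorPairing (x y : G) (hxy : Commute x y) : H2 k G →ₗ[k] k :=
  Submodule.liftQ _
    { toFun := fun c => c.1 x y - c.1 y x
      map_add' := fun c d => by simp only [Submodule.coe_add, Pi.add_apply]; ring
      map_smul' := fun a c => by
        simp only [SetLike.val_smul, Pi.smul_apply, smul_eq_mul, RingHom.id_apply]; ring }
    (by
      rintro c ⟨f, hf⟩
      simp only [LinearMap.mem_ker, LinearMap.coe_mk, AddHom.coe_mk, hf, hxy.eq]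
      ring)

lemma H2.commutatorPairing_cup (x y : G) (hxy : Commute x y) (f g : H1 k G) :
    H2.commutatorPairing x y hxy (cup k G f g) = f.1 x * g.1 y - f.1 y * g.1 x := rfl

end CommutatorPairing

namespace RAAG

variable {V : Type*} (Γ : SimpleGraph V)

lemma gen_commute {v w : V} (h : Γ.Adj v w) : Commute (gen Γ v) (gen Γ w) := by
  have hrel : (PresentedGroup.mk (raagRels Γ)) ⁅FreeGroup.of v, FreeGroup.of w⁆ = 1 :=
    (QuotientGroup.eq_one_iff _).mpr (Subgroup.subset_normalClosure ⟨v, w, h, rfl⟩)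
  rw [map_commutatorElement] at hrel
  exact commutatorElement_eq_one_iff_commute.mp hrel

variable {Γ} {H : Type*} [Group H]

def lift (f : V → H) (hf : ∀ v w, Γ.Adj v w → Commute (f v) (f w)) : RAAG Γ →* H :=
  PresentedGroup.toGroup (rels := raagRels Γ) (f := f) (by
    rintro r ⟨v, w, hvw, rfl⟩
    rw [map_commutatorElement, FreeGroup.lift_apply_of, FreeGroup.lift_apply_of]
    exact commutatorElement_eq_one_iff_commute.mpr (hf v w hvw))

@[simp] lemma lift_gen (f : V → H) (hf : ∀ v w, Γ.Adj v w → Commute (f v) (f w)) (v : V) :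
    lift f hf (gen Γ v) = f v :=
  PresentedGroup.toGroup.of _

lemma hom_ext {φ ψ : RAAG Γ →* H} (h : ∀ v, φ (gen Γ v) = ψ (gen Γ v)) : φ = ψ :=
  PresentedGroup.ext h

variable {k : Type*} [CommRing k]

lemma isTwoCoboundary_of_symm (c : twoCocycles k (RAAG Γ))
    (hc : ∀ v w, Γ.Adj v w → c.1 (gen Γ v) (gen Γ w) = c.1 (gen Γ w) (gen Γ v)) :
    IsTwoCoboundary c.1 := by
  have hcomm (v w : V) (hvw : Γ.Adj v w) :
      Commute (⟨0, gen Γ v⟩ : CocycleExtension c) ⟨0, gen Γ w⟩ := by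
    ext
    · simpa using hc v w hvw
    · exact (gen_commute Γ hvw).eq
  refine CocycleExtension.isTwoCoboundary_of_section (lift _ hcomm) (hom_ext fun v => ?_)
  exact congrArg CocycleExtension.base (lift_gen _ hcomm v)

lemma H2_eq_zero_of_commutatorPairing (z : H2 k (RAAG Γ))
    (hz : ∀ e ∈ Γ.edgeSet, ∃ v w, ∃ h : Γ.Adj v w, s(v, w) = e ∧
      H2.commutatorPairing _ _ (gen_commute Γ h) z = 0) : z = 0 := by
  obtain ⟨c, rfl⟩ := Submodule.Quotient.mk_surjective _ z
  refine (Submodule.Quotient.mk_eq_zero _).mpr (isTwoCoboundary_of_symm c fun v w hvw => ?_)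
  obtain ⟨a, b, _, he, hab⟩ := hz s(v, w) hvw
  have hab : c.1 (gen Γ a) (gen Γ b) = c.1 (gen Γ b) (gen Γ a) := sub_eq_zero.mp hab
  rcases Sym2.eq_iff.mp he with ⟨rfl, rfl⟩ | ⟨rfl, rfl⟩
  · exact hab
  · exact hab.symm

variable [DecidableEq V] (k)

lemma dual_gen (v w : V) : (dual Γ k v).1 (gen Γ w) = if w = v then 1 else 0 :=
  congrArg Multiplicative.toAdd (PresentedGroup.toGroup.of _)

lemma commutatorPairing_cup_dual_self {v w : V} (h : Γ.Adj v w) :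
    H2.commutatorPairing _ _ (gen_commute Γ h) (cup k _ (dual Γ k v) (dual Γ k w)) = 1 := by
  simp [H2.commutatorPairing_cup, dual_gen, h.ne, h.ne.symm]

lemma commutatorPairing_cup_dual_of_ne {v w a b : V} (h : Γ.Adj v w)
    (hne : s(v, w) ≠ s(a, b)) :
    H2.commutatorPairing _ _ (gen_commute Γ h) (cup k _ (dual Γ k a) (dual Γ k b)) = 0 := by
  rw [Ne, Sym2.eq_iff, not_or, not_and_or, not_and_or] at hne
  rw [H2.commutatorPairing_cup, dual_gen, dual_gen, dual_gen, dual_gen]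
  rcases hne with ⟨h₁ | h₁, h₂ | h₂⟩ <;> simp [h₁, h₂]

end RAAG

/-- For a finite graph `Γ` and any field `k`, `H²(A(Γ); k)` is generated
by cup products of elements of `H¹(A(Γ); k)`: indeed the classes `f_v ⌣ f_w` for edges
`{v, w}` of `Γ` form a basis (a linearly independent spanning family indexed by the
edge set). -/
theorem H2_raag_basis_of_edge_cups {V : Type} [Fintype V] [DecidableEq V]
    (Γ : SimpleGraph V) (k : Type) [Field k] :
    ∃ F : Γ.edgeSet → H2 k (RAAG Γ),
      (∀ e : Γ.edgeSet, ∃ v w : V, Γ.Adj v w ∧ (e : Sym2 V) = s(v, w) ∧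
        F e = cup k (RAAG Γ) (RAAG.dual Γ k v) (RAAG.dual Γ k w)) ∧
      LinearIndependent k F ∧ Submodule.span k (Set.range F) = ⊤ := by
  let o : Γ.edgeSet → V × V := fun e => (e : Sym2 V).out
  have ho (e : Γ.edgeSet) : s((o e).1, (o e).2) = e := Quot.out_eq _
  have hadj (e : Γ.edgeSet) : Γ.Adj (o e).1 (o e).2 := by
    rw [← SimpleGraph.mem_edgeSet, ho]; exact e.2
  let F : Γ.edgeSet → H2 k (RAAG Γ) := fun e =>
    cup k (RAAG Γ) (RAAG.dual Γ k (o e).1) (RAAG.dual Γ k (o e).2)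
  let ε : Γ.edgeSet → Module.Dual k (H2 k (RAAG Γ)) := fun e =>
    H2.commutatorPairing _ _ (RAAG.gen_commute Γ (hadj e))
  have hdual : Module.DualBases F ε :=
    { eval_same := fun e => RAAG.commutatorPairing_cup_dual_self k (hadj e)
      eval_of_ne := fun e e' hne => RAAG.commutatorPairing_cup_dual_of_ne k (hadj e)
        (by rw [ho, ho]; exact fun h => hne (Subtype.ext h))
      total := fun {x y} hxy => sub_eq_zero.mp <| RAAG.H2_eq_zero_of_commutatorPairing _
        fun e he => ⟨_, _, hadj ⟨e, he⟩, ho ⟨e, he⟩, by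
          rw [map_sub, sub_eq_zero]; exact hxy ⟨e, he⟩⟩ }
  refine ⟨F, fun e => ⟨_, _, hadj e, (ho e).symm, rfl⟩, ?_, ?_⟩
  · simpa only [hdual.coe_basis] using hdual.basis.linearIndependent
  · simpa only [hdual.coe_basis] using hdual.basis.span_eq
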